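/- arXiv:math/9411230 — 3 statements merged into one kernel-verified Lean document; each statement's English description precedes it below -/
import Mathlib

section
/- The complex unital *-algebra Z generated by elements z and z* subject to the relation z* z = q² z z* + (1 - q²), with 0 < q < 1, has as a linear basis the set {z^k (z*)^l : k, l ∈ ℤ≥0}. -/
noncomputable section

open scoped BigOperators

/-- The `q`-shifted factorial `(a;q)_k`. -/
def qPoch (a q : ℝ) (k : ℕ) : ℝ := ∏ j ∈ Finset.range k, (1 - a * q ^ j)

inductive ZGen | z | zs

/-- The single defining relation `z* z = q² z z* + (1 - q²)`. -/
inductive ZRel (q : ℝ) : FreeAlgebra ℂ ZGen → FreeAlgebra ℂ ZGen → Prop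
  | rel : ZRel q (FreeAlgebra.ι ℂ ZGen.zs * FreeAlgebra.ι ℂ ZGen.z)
      (((q : ℂ) ^ 2) • (FreeAlgebra.ι ℂ ZGen.z * FreeAlgebra.ι ℂ ZGen.zs) +
        ((1 : ℂ) - (q : ℂ) ^ 2) • 1)

/-- The universal complex unital algebra with generators `z`, `z*` and the relation
`z* z = q² z z* + (1 - q²)`. -/
abbrev ZAlg (q : ℝ) := RingQuot (ZRel q)

def zZ (q : ℝ) : ZAlg q := RingQuot.mkAlgHom ℂ (ZRel q) (FreeAlgebra.ι ℂ ZGen.z)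
def zsZ (q : ℝ) : ZAlg q := RingQuot.mkAlgHom ℂ (ZRel q) (FreeAlgebra.ι ℂ ZGen.zs)

/-!
Using the relation to move `z*` to the right of `z`, left multiplication by `z` and by `z*`
preserves the span of the ordered monomials `z^k z*^l`; since `z`, `z*` generate, that span is
everything. For independence, the same rewriting rule, applied to formal symbols `e_{k,l}`,
defines a representation of the algebra on the free module with basis `e_{k,l}` in which
`z^k z*^l` maps `e_{0,0}` to `e_{k,l}`.
-/

section Spanning

variable {R A : Type*} [CommSemiring R] [Semiring A] [Algebra R A]

theorem Submodule.mul_mem_span_range {ι : Type*} {v : ι → A} {a m : A}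
    (h : ∀ i, a * v i ∈ Submodule.span R (Set.range v))
    (hm : m ∈ Submodule.span R (Set.range v)) : a * m ∈ Submodule.span R (Set.range v) := by
  have : (Submodule.span R (Set.range v)).map (LinearMap.mulLeft R a) ≤
      Submodule.span R (Set.range v) := by
    rw [Submodule.map_span, Submodule.span_le]
    rintro _ ⟨_, ⟨i, rfl⟩, rfl⟩
    exact h i
  exact this ⟨m, hm, rfl⟩

theorem span_range_pow_mul_pow_eq_top {x y : A} {α β : R} (hyx : y * x = α • (x * y) + β • 1)
    (hgen : Algebra.adjoin R {x, y} = ⊤) :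
    Submodule.span R (Set.range fun p : ℕ × ℕ => x ^ p.1 * y ^ p.2) = ⊤ := by
  set M := Submodule.span R (Set.range fun p : ℕ × ℕ => x ^ p.1 * y ^ p.2)
  have hmono (k l : ℕ) : x ^ k * y ^ l ∈ M := Submodule.subset_span ⟨(k, l), rfl⟩
  have hx (m : A) (hm : m ∈ M) : x * m ∈ M :=
    Submodule.mul_mem_span_range (fun p => by
      simpa only [← mul_assoc, ← pow_succ'] using hmono (p.1 + 1) p.2) hm
  have hy_mono (k l : ℕ) : y * (x ^ k * y ^ l) ∈ M := by
    induction k generalizing l with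
    | zero => simpa only [pow_zero, one_mul, ← pow_succ'] using hmono 0 (l + 1)
    | succ k ih =>
      have hexpand : y * (x ^ (k + 1) * y ^ l) =
          α • (x * (y * (x ^ k * y ^ l))) + β • (x ^ k * y ^ l) := by
        rw [pow_succ', mul_assoc, ← mul_assoc y, hyx, add_mul, smul_mul_assoc, smul_mul_assoc,
          one_mul, mul_assoc]
      rw [hexpand]
      exact M.add_mem (M.smul_mem _ (hx _ (ih l))) (M.smul_mem _ (hmono k l))
  have hy (m : A) (hm : m ∈ M) : y * m ∈ M :=
    Submodule.mul_mem_span_range (fun p => hy_mono p.1 p.2) hm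
  have hmul (a m : A) (hm : m ∈ M) : a * m ∈ M := by
    have ha : a ∈ Algebra.adjoin R {x, y} := hgen ▸ Algebra.mem_top
    induction ha using Algebra.adjoin_induction generalizing m with
    | mem a ha =>
      rcases ha with rfl | rfl
      · exact hx m hm
      · exact hy m hm
    | algebraMap r => simpa only [Algebra.algebraMap_eq_smul_one, smul_mul_assoc, one_mul]
        using M.smul_mem r hm
    | add a b _ _ ha hb => simpa only [add_mul] using M.add_mem (ha m hm) (hb m hm)
    | mul a b _ _ ha hb => simpa only [mul_assoc] using ha _ (hb m hm)
  refine eq_top_iff.2 fun a _ => ?_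
  simpa using hmul a 1 (by simpa using hmono 0 0)

end Spanning

namespace ZAlg

theorem zsZ_mul_zZ (q : ℝ) :
    zsZ q * zZ q = ((q : ℂ) ^ 2) • (zZ q * zsZ q) + ((1 : ℂ) - (q : ℂ) ^ 2) • 1 := by
  simpa only [map_mul, map_add, map_smul, map_one, zZ, zsZ] using
    RingQuot.mkAlgHom_rel ℂ (ZRel.rel (q := q))

theorem adjoin_zZ_zsZ (q : ℝ) : Algebra.adjoin ℂ {zZ q, zsZ q} = ⊤ := by
  have hgens : RingQuot.mkAlgHom ℂ (ZRel q) '' Set.range (FreeAlgebra.ι ℂ) = {zZ q, zsZ q} := by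
    ext a
    simp only [Set.mem_image, Set.mem_range, exists_exists_eq_and, Set.mem_insert_iff,
      Set.mem_singleton_iff]
    constructor
    · rintro ⟨(_ | _), rfl⟩
      exacts [Or.inl rfl, Or.inr rfl]
    · rintro (rfl | rfl)
      exacts [⟨.z, rfl⟩, ⟨.zs, rfl⟩]
  rw [← hgens, ← AlgHom.map_adjoin, FreeAlgebra.adjoin_range_ι, Algebra.map_top,
    AlgHom.range_eq_top]
  exact RingQuot.mkAlgHom_surjective ℂ (ZRel q)

section MonomialModule

variable (R : Type*) [CommRing R]

def zOp : Module.End R ((ℕ × ℕ) →₀ R) := Finsupp.lmapDomain R R fun p => (p.1 + 1, p.2)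

variable {R}

/-- Left multiplication by `z*` on the monomial `z^k z*^l`, expanded with
`z* z^k = c^k z^k z* + (1 - c^k) z^(k-1)`; at `k = 0` the truncated `k - 1` carries
the coefficient `0`. -/
def zsOpSingle (c : R) (p : ℕ × ℕ) : (ℕ × ℕ) →₀ R :=
  c ^ p.1 • Finsupp.single (p.1, p.2 + 1) 1 + (1 - c ^ p.1) • Finsupp.single (p.1 - 1, p.2) 1

def zsOp (c : R) : Module.End R ((ℕ × ℕ) →₀ R) := Finsupp.linearCombination R (zsOpSingle c)

theorem zOp_single (p : ℕ × ℕ) (r : R) :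
    zOp R (Finsupp.single p r) = Finsupp.single (p.1 + 1, p.2) r :=
  Finsupp.mapDomain_single

theorem zsOp_single (c : R) (p : ℕ × ℕ) (r : R) :
    zsOp c (Finsupp.single p r) = r • zsOpSingle c p :=
  Finsupp.linearCombination_single R r p

theorem zsOp_mul_zOp (c : R) : zsOp c * zOp R = c • (zOp R * zsOp c) + (1 - c) • 1 := by
  refine Finsupp.lhom_ext' fun p => LinearMap.ext_ring ?_
  obtain ⟨k, l⟩ := p
  simp only [LinearMap.comp_apply, Finsupp.lsingle_apply, Module.End.mul_apply,
    LinearMap.add_apply, LinearMap.smul_apply, Module.End.one_apply, zOp_single, zsOp_single,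
    zsOpSingle, one_smul, map_add, map_smul]
  cases k with
  | zero => simp only [pow_zero, sub_self, zero_smul, add_zero, zero_add, pow_one]; module
  | succ k => simp only [Nat.add_sub_cancel, pow_succ]; module

theorem zOp_pow_single (k : ℕ) (p : ℕ × ℕ) (r : R) :
    (zOp R ^ k) (Finsupp.single p r) = Finsupp.single (p.1 + k, p.2) r := by
  induction k with
  | zero => rfl
  | succ k ih => rw [pow_succ', Module.End.mul_apply, ih, zOp_single, add_assoc]

theorem zsOp_pow_single_zero (c : R) (l m : ℕ) :
    (zsOp c ^ l) (Finsupp.single (0, m) 1) = Finsupp.single (0, m + l) 1 := by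
  induction l with
  | zero => rfl
  | succ l ih => simp [pow_succ', ih, zsOp_single, zsOpSingle, add_assoc]

end MonomialModule

def monomialRep (q : ℝ) : ZAlg q →ₐ[ℂ] Module.End ℂ ((ℕ × ℕ) →₀ ℂ) :=
  RingQuot.liftAlgHom ℂ ⟨FreeAlgebra.lift ℂ fun | .z => zOp ℂ | .zs => zsOp ((q : ℂ) ^ 2), by
    rintro _ _ ⟨⟩
    simpa only [map_mul, map_add, map_smul, map_one, FreeAlgebra.lift_ι_apply] using
      zsOp_mul_zOp ((q : ℂ) ^ 2)⟩

theorem monomialRep_zZ (q : ℝ) : monomialRep q (zZ q) = zOp ℂ := by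
  simp [monomialRep, zZ]

theorem monomialRep_zsZ (q : ℝ) : monomialRep q (zsZ q) = zsOp ((q : ℂ) ^ 2) := by
  simp [monomialRep, zsZ]

theorem monomialRep_monomial_single_zero (q : ℝ) (k l : ℕ) :
    monomialRep q (zZ q ^ k * zsZ q ^ l) (Finsupp.single (0, 0) 1) = Finsupp.single (k, l) 1 := by
  rw [map_mul, map_pow, map_pow, monomialRep_zZ, monomialRep_zsZ, Module.End.mul_apply,
    zsOp_pow_single_zero, zOp_pow_single, zero_add, zero_add]

theorem linearIndependent_monomials (q : ℝ) :
    LinearIndependent ℂ fun p : ℕ × ℕ => zZ q ^ p.1 * zsZ q ^ p.2 := by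
  refine LinearIndependent.of_comp
    ((LinearMap.applyₗ (Finsupp.single (0, 0) 1)).comp (monomialRep q).toLinearMap) ?_
  convert (Finsupp.basisSingleOne (R := ℂ) (ι := ℕ × ℕ)).linearIndependent
  ext1 p
  simpa using monomialRep_monomial_single_zero q p.1 p.2

end ZAlg

theorem stmt0_general (q : ℝ) :
    ∃ b : Module.Basis (ℕ × ℕ) ℂ (ZAlg q), ∀ k l : ℕ, b (k, l) = zZ q ^ k * zsZ q ^ l :=
  ⟨Module.Basis.mk (ZAlg.linearIndependent_monomials q)
      (span_range_pow_mul_pow_eq_top (ZAlg.zsZ_mul_zZ q) (ZAlg.adjoin_zZ_zsZ q)).ge,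
    fun _ _ => Module.Basis.mk_apply _ _ _⟩

theorem stmt0 (q : ℝ) (hq0 : 0 < q) (hq1 : q < 1) :
    ∃ b : Module.Basis (ℕ × ℕ) ℂ (ZAlg q), ∀ k l : ℕ, b (k, l) = zZ q ^ k * zsZ q ^ l :=
  stmt0_general q
end
end

section
/- The linear functional h_α on Z is positive semidefinite and in fact positive definite on the span of monomials: for any p ∈ Z, h_α(p* p) ≥ 0, with equality iff p = 0. -/
noncomputable section

open scoped BigOperators

/-- The value `q^{2k(α+1)} (q²;q²)_k / (q^{2(α+2)};q²)_k` of `h_α` on `zᵏ (z*)ᵏ`. -/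
def hVal (q α : ℝ) (k : ℕ) : ℝ :=
  q ^ (2 * k * (α + 1) : ℝ) * qPoch (q ^ 2) (q ^ 2) k /
    qPoch (q ^ (2 * (α + 2) : ℝ)) (q ^ 2) k

namespace Stmt4Aux

variable (q α : ℝ)

def Qk (k : ℕ) : ℝ := qPoch (q^2) (q^2) k
def sP : ℝ := q ^ (2*(α+1) : ℝ)

variable {q α}

lemma q2pos (hq0 : 0 < q) : 0 < q^2 := by positivity
lemma q2lt1 (hq0 : 0 < q) (hq1 : q < 1) : q^2 < 1 := by nlinarith

lemma qPoch_succ (x Y : ℝ) (k : ℕ) : qPoch x Y (k+1) = qPoch x Y k * (1 - x * Y^k) :=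
  Finset.prod_range_succ _ _

lemma qPoch_succ' (x Y : ℝ) (k : ℕ) : qPoch x Y (k+1) = (1 - x) * qPoch (x*Y) Y k := by
  rw [qPoch, Finset.prod_range_succ']
  simp only [pow_zero, mul_one]
  rw [mul_comm]
  congr 1
  apply Finset.prod_congr rfl
  intro j _
  rw [pow_succ']
  ring

lemma qPoch_pos (hq0 : 0 < q) (hq1 : q < 1) {x : ℝ} (hx0 : 0 ≤ x) (hx1 : x < 1) (k : ℕ) :
    0 < qPoch x (q^2) k := by
  apply Finset.prod_pos
  intro j _
  have h1 : x * (q^2)^j ≤ x * 1 := by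
    apply mul_le_mul_of_nonneg_left _ hx0
    exact pow_le_one₀ (le_of_lt (q2pos hq0)) (le_of_lt (q2lt1 hq0 hq1))
  nlinarith

lemma Qk_zero : Qk q 0 = 1 := by simp [Qk, qPoch]

lemma Qk_succ (k : ℕ) : Qk q (k+1) = Qk q k * (1 - (q^2)^(k+1)) := by
  rw [Qk, qPoch_succ, ← pow_succ']
  rfl

lemma Qk_pos (hq0 : 0 < q) (hq1 : q < 1) (k : ℕ) : 0 < Qk q k :=
  qPoch_pos hq0 hq1 (le_of_lt (q2pos hq0)) (q2lt1 hq0 hq1) k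

lemma sP_pos (hq0 : 0 < q) (hα : -1 < α) : 0 < sP q α := Real.rpow_pos_of_pos hq0 _

lemma sP_lt_one (hq0 : 0 < q) (hq1 : q < 1) (hα : -1 < α) : sP q α < 1 :=
  Real.rpow_lt_one (le_of_lt hq0) hq1 (by linarith)

/-- The q-binomial-type summation. -/
lemma QB (hq0 : 0 < q) (hq1 : q < 1) :
    ∀ (a : ℕ) {x : ℝ}, 0 ≤ x → x < 1 →
      HasSum (fun r => x^r * (Qk q (a+r) / Qk q r)) (Qk q a / qPoch x (q^2) (a+1)) := by
  intro a
  induction a with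
  | zero =>
    intro x hx0 hx1
    have h1 : (fun r => x^r * (Qk q (0+r) / Qk q r)) = fun r => x^r := by
      funext r
      rw [zero_add, div_self (ne_of_gt (Qk_pos hq0 hq1 r)), mul_one]
    rw [h1]
    have h2 : Qk q 0 / qPoch x (q^2) (0+1) = (1-x)⁻¹ := by
      rw [Qk_zero]
      rw [show (0+1 : ℕ) = 1 from rfl]
      rw [show qPoch x (q^2) 1 = 1 - x by simp [qPoch]]
      rw [one_div]
    rw [h2]
    exact hasSum_geometric_of_lt_one hx0 hx1
  | succ a ih =>
    intro x hx0 hx1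
    have hq2x : 0 ≤ x * q^2 := by positivity
    have hq2x1 : x * q^2 < 1 := by nlinarith [q2pos hq0, q2lt1 hq0 hq1]
    have H1 := ih hx0 hx1
    have H2 := (ih hq2x hq2x1).mul_left ((q^2)^(a+1))
    have key : (fun r => x^r * (Qk q (a+1+r) / Qk q r)) =
        fun r => x^r * (Qk q (a+r) / Qk q r) -
          ((q^2)^(a+1)) * ((x*q^2)^r * (Qk q (a+r) / Qk q r)) := by
      funext r
      have : Qk q (a+1+r) = Qk q (a+r) * (1 - (q^2)^(a+r+1)) := by
        rw [show a+1+r = (a+r)+1 by omega, Qk_succ]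
      rw [this, mul_pow]
      have hQr := ne_of_gt (Qk_pos hq0 hq1 r)
      field_simp
      ring
    rw [key]
    have H3 := H1.sub H2
    convert H3 using 1
    · rfl
    -- value identity
    have hPx := qPoch_pos hq0 hq1 hx0 hx1
    have hPxq := qPoch_pos hq0 hq1 hq2x hq2x1
    have e1 : qPoch x (q^2) (a+2) = (1-x) * qPoch (x*q^2) (q^2) (a+1) := qPoch_succ' _ _ _
    have e2 : qPoch x (q^2) (a+2) = qPoch x (q^2) (a+1) * (1 - x*(q^2)^(a+1)) := qPoch_succ _ _ _
    have e3 : Qk q (a+1) = Qk q a * (1 - (q^2)^(a+1)) := Qk_succ a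
    have h4 : qPoch x (q^2) (a+2) ≠ 0 := by
      rw [qPoch_succ]
      have := ne_of_gt (hPx (a+1))
      have hfac : 0 < 1 - x*(q^2)^(a+1) := by
        have h1 : x * (q^2)^(a+1) ≤ x * 1 := by
          apply mul_le_mul_of_nonneg_left _ hx0
          exact pow_le_one₀ (le_of_lt (q2pos hq0)) (le_of_lt (q2lt1 hq0 hq1))
        nlinarith
      exact mul_ne_zero this (ne_of_gt hfac)
    rw [show a+1+1 = a+2 by omega, e3]
    rw [e1]
    have hrel : (1-x) * qPoch (x*q^2) (q^2) (a+1) = qPoch x (q^2) (a+1) * (1 - x*(q^2)^(a+1)) := by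
      rw [← e1, e2]
    have hx' : (1:ℝ) - x ≠ 0 := by linarith
    have hT : qPoch (x*q^2) (q^2) (a+1) ≠ 0 := ne_of_gt (hPxq (a+1))
    have hP : qPoch x (q^2) (a+1) ≠ 0 := ne_of_gt (hPx (a+1))
    generalize qPoch (x*q^2) (q^2) (a+1) = T at hrel hT ⊢
    generalize qPoch x (q^2) (a+1) = P at hrel hP ⊢
    rw [div_eq_iff (mul_ne_zero hx' hT)]
    field_simp
    linear_combination (-(Qk q a)) * hrel

variable (q α) in
/-- weights of the discrete measure -/
def wco (a r : ℕ) : ℝ := (1 - sP q α) * sP q α ^ (a+r) * (Qk q (a+r) / Qk q r)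

variable (q α) in
/-- `h(zᵃ uⁱ z*ᵃ)` -/
def mh : ℕ → ℕ → ℝ
  | 0, a => hVal q α a
  | (i+1), a => mh i a - (q^2)^i * mh i (a+1)

variable (q α) in
/-- `h(zᵃ A(c,k) uⁱ z*ᵃ)` -/
def nuv : ℕ → ℕ → ℕ → ℕ → ℝ
  | 0, _, i, a => mh q α i a
  | (k+1), c, i, a => nuv k (c+1) i a - (q^2)^(c+1) * nuv k (c+1) (i+1) a

variable (q) in
def Pk (c k r : ℕ) : ℝ := ∏ j ∈ Finset.range k, (1 - (q^2)^(c+1+j+r))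

variable (q) in
def Vk (l t : ℕ) : ℝ := ∏ j ∈ Finset.range l, (1 - (q^2)^(t-j))

variable (q α) in
def weight (d : ℤ) (t : ℕ) : ℝ :=
  (1 - sP q α) * sP q α ^ t * (if 0 ≤ (t:ℤ)+d then Qk q ((t+d).toNat) else 0) / Qk q t

lemma sP_rpow (hq0 : 0 < q) (a : ℕ) : q ^ (2 * (a:ℝ) * (α + 1) : ℝ) = sP q α ^ a := by
  rw [sP, ← Real.rpow_natCast (q ^ (2*(α+1) : ℝ)) a, ← Real.rpow_mul (le_of_lt hq0)]
  ring_nf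

lemma sq2_rpow (hq0 : 0 < q) : q ^ (2 * (α + 2) : ℝ) = sP q α * q^2 := by
  rw [sP, ← Real.rpow_natCast q 2, ← Real.rpow_add hq0]
  norm_num
  ring_nf

lemma hVal_eq (hq0 : 0 < q) (hq1 : q < 1) (hα : -1 < α) (a : ℕ) :
    hVal q α a = sP q α ^ a * Qk q a / qPoch (sP q α * q^2) (q^2) a := by
  rw [hVal, sP_rpow hq0, sq2_rpow hq0]
  rfl

lemma wco_hasSum (hq0 : 0 < q) (hq1 : q < 1) (hα : -1 < α) (a : ℕ) :
    HasSum (wco q α a) (hVal q α a) := by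
  have hs0 : 0 ≤ sP q α := le_of_lt (sP_pos hq0 hα)
  have hs1 : sP q α < 1 := sP_lt_one hq0 hq1 hα
  have H := (QB hq0 hq1 a hs0 hs1).mul_left ((1 - sP q α) * sP q α ^ a)
  have key : (fun r => (1 - sP q α) * sP q α ^ a * (sP q α ^ r * (Qk q (a+r) / Qk q r)))
      = wco q α a := by
    funext r
    rw [wco, pow_add]
    ring
  rw [key] at H
  convert H using 1
  · rfl
  rw [hVal_eq hq0 hq1 hα, qPoch_succ']
  have h1 : qPoch (sP q α * q^2) (q^2) a ≠ 0 := by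
    apply ne_of_gt
    apply qPoch_pos hq0 hq1 (by positivity)
    calc sP q α * q^2 ≤ sP q α * 1 := by
          apply mul_le_mul_of_nonneg_left (le_of_lt (q2lt1 hq0 hq1)) hs0
      _ < 1 := by rwa [mul_one]
  have h2 : (1:ℝ) - sP q α ≠ 0 := by linarith
  field_simp

lemma wco_pos (hq0 : 0 < q) (hq1 : q < 1) (hα : -1 < α) (a r : ℕ) : 0 < wco q α a r := by
  have hs1 : sP q α < 1 := sP_lt_one hq0 hq1 hα
  have := sP_pos hq0 hα (α := α)
  apply mul_pos (mul_pos (by linarith) (by positivity))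
  exact div_pos (Qk_pos hq0 hq1 _) (Qk_pos hq0 hq1 _)

lemma mh_hasSum (hq0 : 0 < q) (hq1 : q < 1) (hα : -1 < α) :
    ∀ (i a : ℕ), HasSum (fun r => wco q α a r * ((q^2)^i)^r) (mh q α i a) := by
  intro i
  induction i with
  | zero =>
    intro a
    simpa [mh] using wco_hasSum hq0 hq1 hα a
  | succ i ih =>
    intro a
    have H1 := ih a
    have H2 := (ih (a+1)).mul_left ((q^2)^i)
    set f : ℕ → ℝ := fun r => (if r = 0 then 0 else wco q α (a+1) (r-1)) * ((q^2)^i)^r with hf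
    have H2' : HasSum (fun n => f (n+1)) ((q^2)^i * mh q α i (a+1)) := by
      have heq : (fun n => f (n+1)) = fun n => (q^2)^i * (wco q α (a+1) n * ((q^2)^i)^n) := by
        funext n
        simp only [hf, Nat.add_sub_cancel, if_neg (Nat.succ_ne_zero n)]
        rw [pow_succ]
        ring
      rw [heq]
      exact H2
    have hshift : HasSum f ((q^2)^i * mh q α i (a+1)) := by
      have := (hasSum_nat_add_iff (f := f) 1).mp H2'
      simpa [hf] using this
    have hw : ∀ r : ℕ, wco q α a (r+1) * (1 - (q^2)^(r+1)) = wco q α (a+1) r := by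
      intro r
      have hQ : Qk q (r+1) = Qk q r * (1 - (q^2)^(r+1)) := Qk_succ r
      have hQr := ne_of_gt (Qk_pos hq0 hq1 r)
      have hQr1 := ne_of_gt (Qk_pos hq0 hq1 (r+1))
      rw [wco, wco, show a+1+r = a+(r+1) by omega, hQ]
      have hfac : (1:ℝ) - (q^2)^(r+1) ≠ 0 := by
        intro hc
        rw [hQ, hc, mul_zero] at hQr1
        exact hQr1 rfl
      field_simp
    have key : (fun r => wco q α a r * ((q^2)^(i+1))^r)
        = fun r => wco q α a r * ((q^2)^i)^r - f r := by
      funext r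
      cases r with
      | zero => simp [hf]
      | succ n =>
        simp only [hf, if_neg (Nat.succ_ne_zero n), Nat.add_sub_cancel]
        rw [← hw n]
        rw [show ((q^2)^(i+1))^(n+1) = ((q^2)^i)^(n+1) * (q^2)^(n+1) by
          rw [← mul_pow, ← pow_succ]]
        ring
    rw [key, show mh q α (i+1) a = mh q α i a - (q^2)^i * mh q α i (a+1) from rfl]
    exact H1.sub hshift

lemma Pk_succ' (c k r : ℕ) : Pk q c (k+1) r = (1 - (q^2)^(c+1+r)) * Pk q (c+1) k r := by
  rw [Pk, Finset.prod_range_succ', Pk, mul_comm]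
  simp only [add_zero]
  congr 1
  apply Finset.prod_congr rfl
  intro j _
  have : c+1+(j+1)+r = c+1+1+j+r := by omega
  rw [this]

lemma Pk_succ (c k r : ℕ) : Pk q c (k+1) r = Pk q c k r * (1 - (q^2)^(c+1+k+r)) :=
  Finset.prod_range_succ _ _

lemma Qk_Pk (c k r : ℕ) : Qk q (c+r) * Pk q c k r = Qk q (c+k+r) := by
  induction k with
  | zero => simp [Pk]
  | succ k ih =>
    rw [Pk_succ, ← mul_assoc, ih, show c+(k+1)+r = (c+k+r)+1 by omega, Qk_succ,
      show c+1+k+r = c+k+r+1 by omega]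

lemma nuv_hasSum (hq0 : 0 < q) (hq1 : q < 1) (hα : -1 < α) :
    ∀ (k c i a : ℕ),
      HasSum (fun r => wco q α a r * ((q^2)^i)^r * Pk q c k r) (nuv q α k c i a) := by
  intro k
  induction k with
  | zero =>
    intro c i a
    simpa [Pk, nuv] using mh_hasSum hq0 hq1 hα i a
  | succ k ih =>
    intro c i a
    have H1 := ih (c+1) i a
    have H2 := (ih (c+1) (i+1) a).mul_left ((q^2)^(c+1))
    have key : (fun r => wco q α a r * ((q^2)^i)^r * Pk q c (k+1) r)
        = fun r => wco q α a r * ((q^2)^i)^r * Pk q (c+1) k r -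
            (q^2)^(c+1) * (wco q α a r * ((q^2)^(i+1))^r * Pk q (c+1) k r) := by
      funext r
      rw [Pk_succ']
      rw [show ((q^2)^(i+1))^r = ((q^2)^i)^r * ((q^2)^r) by rw [← mul_pow, ← pow_succ]]
      rw [show ((q:ℝ)^2)^(c+1+r) = (q^2)^(c+1) * (q^2)^r by rw [← pow_add]]
      ring
    rw [key, show nuv q α (k+1) c i a
        = nuv q α k (c+1) i a - (q^2)^(c+1) * nuv q α k (c+1) (i+1) a from rfl]
    exact H1.sub H2

lemma Vk_eq_zero (l t : ℕ) (h : t < l) : Vk q l t = 0 := by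
  apply Finset.prod_eq_zero (Finset.mem_range.mpr h)
  simp

lemma Vk_mul_Qk (l t : ℕ) (h : l ≤ t) : Vk q l t * Qk q (t-l) = Qk q t := by
  induction l with
  | zero => simp [Vk]
  | succ l ih =>
    have h' : l ≤ t := by omega
    rw [Vk, Finset.prod_range_succ, ← Vk]
    have : Qk q (t-l) = Qk q (t-(l+1)) * (1 - (q^2)^(t-l)) := by
      rw [show t-l = (t-(l+1))+1 by omega, Qk_succ, show t-(l+1)+1 = t-l by omega]
    calc Vk q l t * (1 - (q^2)^(t-l)) * Qk q (t-(l+1))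
        = Vk q l t * (Qk q (t-(l+1)) * (1 - (q^2)^(t-l))) := by ring
      _ = Vk q l t * Qk q (t-l) := by rw [← this]
      _ = Qk q t := ih h'

lemma Vk_self (hq0 : 0 < q) (hq1 : q < 1) (l : ℕ) : Vk q l l = Qk q l := by
  have := Vk_mul_Qk (q := q) l l le_rfl
  simpa [Qk_zero] using this

lemma weight_nonneg (hq0 : 0 < q) (hq1 : q < 1) (hα : -1 < α) (d : ℤ) (t : ℕ) :
    0 ≤ weight q α d t := by
  have hs1 : sP q α < 1 := sP_lt_one hq0 hq1 hα
  have hsp := sP_pos hq0 hα (α := α)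
  apply div_nonneg _ (le_of_lt (Qk_pos hq0 hq1 t))
  apply mul_nonneg (mul_nonneg (by linarith) (by positivity))
  split
  · exact le_of_lt (Qk_pos hq0 hq1 _)
  · exact le_refl 0

lemma weight_pos (hq0 : 0 < q) (hq1 : q < 1) (hα : -1 < α) (d : ℤ) (t : ℕ)
    (h : 0 ≤ (t:ℤ)+d) : 0 < weight q α d t := by
  have hs1 : sP q α < 1 := sP_lt_one hq0 hq1 hα
  have hsp := sP_pos hq0 hα (α := α)
  apply div_pos _ (Qk_pos hq0 hq1 t)
  apply mul_pos (mul_pos (by linarith) (by positivity))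
  rw [if_pos h]
  exact Qk_pos hq0 hq1 _

lemma master (hq0 : 0 < q) (hq1 : q < 1) (hα : -1 < α) (k l m n : ℕ) (hc : k + n = l + m) :
    HasSum (fun t => weight q α ((k:ℤ)-(l:ℤ)) t * (Vk q l t * Vk q n t))
      (if k ≤ m then nuv q α k (m-k) 0 n else nuv q α m (k-m) 0 l) := by
  by_cases hkm : k ≤ m
  · rw [if_pos hkm]
    have hln : l ≤ n := by omega
    have H := nuv_hasSum hq0 hq1 hα k (m-k) 0 n
    simp only [pow_zero, one_pow, mul_one] at H
    have hinj : Function.Injective (fun r : ℕ => n + r) := fun a b hab => by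
      simp only [] at hab; omega
    rw [← Function.Injective.hasSum_iff hinj ?van]
    case van =>
      intro t ht
      have htn : t < n := by
        by_contra hge
        exact ht ⟨t - n, show n + (t-n) = t by omega⟩
      rw [Vk_eq_zero (q := q) n t htn]
      ring
    convert H using 1
    funext r
    simp only [Function.comp]
    have e1 : Vk q l (n+r) * Qk q (m-k+r) = Qk q (n+r) := by
      have h := Vk_mul_Qk (q := q) l (n+r) (by omega)
      rwa [show n+r-l = m-k+r by omega] at h
    have e2 : Vk q n (n+r) * Qk q r = Qk q (n+r) := by
      have h := Vk_mul_Qk (q := q) n (n+r) (by omega)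
      rwa [show n+r-n = r by omega] at h
    have e3 : Qk q (m-k+r) * Pk q (m-k) k r = Qk q (m+r) := by
      have h := Qk_Pk (q := q) (m-k) k r
      rwa [show m-k+k+r = m+r by omega] at h
    have hcond : (0:ℤ) ≤ ((n+r : ℕ):ℤ) + ((k:ℤ)-(l:ℤ)) := by push_cast; omega
    have htoNat : ((((n+r : ℕ):ℤ) + ((k:ℤ)-(l:ℤ)))).toNat = m + r := by omega
    rw [weight, if_pos hcond, htoNat, wco]
    have hQn := (Qk_pos hq0 hq1 (n+r)).ne'
    have hQr := (Qk_pos hq0 hq1 r).ne'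
    have hQmk := (Qk_pos hq0 hq1 (m-k+r)).ne'
    field_simp
    linear_combination ((1 - sP q α) * sP q α ^ (n+r)) *
      ((Qk q (m+r) * Vk q l (n+r)) * e2 + (Pk q (m-k) k r * Qk q (n+r)) * e1
        - (Vk q l (n+r) * Qk q (n+r)) * e3)
  · rw [if_neg hkm]
    have hmk : m < k := by omega
    have hnl : n ≤ l := by omega
    have H := nuv_hasSum hq0 hq1 hα m (k-m) 0 l
    simp only [pow_zero, one_pow, mul_one] at H
    have hinj : Function.Injective (fun r : ℕ => l + r) := fun a b hab => by
      simp only [] at hab; omega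
    rw [← Function.Injective.hasSum_iff hinj ?van]
    case van =>
      intro t ht
      have htl : t < l := by
        by_contra hge
        exact ht ⟨t - l, show l + (t-l) = t by omega⟩
      rw [Vk_eq_zero (q := q) l t htl]
      ring
    convert H using 1
    funext r
    simp only [Function.comp]
    have e1 : Vk q n (l+r) * Qk q (k-m+r) = Qk q (l+r) := by
      have h := Vk_mul_Qk (q := q) n (l+r) (by omega)
      rwa [show l+r-n = k-m+r by omega] at h
    have e2 : Vk q l (l+r) * Qk q r = Qk q (l+r) := by
      have h := Vk_mul_Qk (q := q) l (l+r) (by omega)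
      rwa [show l+r-l = r by omega] at h
    have e3 : Qk q (k-m+r) * Pk q (k-m) m r = Qk q (k+r) := by
      have h := Qk_Pk (q := q) (k-m) m r
      rwa [show k-m+m+r = k+r by omega] at h
    have hcond : (0:ℤ) ≤ ((l+r : ℕ):ℤ) + ((k:ℤ)-(l:ℤ)) := by push_cast; omega
    have htoNat : ((((l+r : ℕ):ℤ) + ((k:ℤ)-(l:ℤ)))).toNat = k + r := by omega
    rw [weight, if_pos hcond, htoNat, wco]
    have hQl := (Qk_pos hq0 hq1 (l+r)).ne'
    have hQr := (Qk_pos hq0 hq1 r).ne'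
    have hQkm := (Qk_pos hq0 hq1 (k-m+r)).ne'
    field_simp
    linear_combination ((1 - sP q α) * sP q α ^ (l+r)) *
      ((Qk q (k+r) * Vk q n (l+r)) * e2 + (Pk q (k-m) m r * Qk q (l+r)) * e1
        - (Vk q n (l+r) * Qk q (l+r)) * e3)

/-! ## Algebra part -/

variable (q) in
def uA : ZAlg q := 1 - zZ q * zsZ q

lemma rel1 : zsZ q * zZ q = ((q:ℂ)^2) • (zZ q * zsZ q) + ((1:ℂ) - (q:ℂ)^2) • (1 : ZAlg q) := by
  have h := RingQuot.mkAlgHom_rel ℂ (ZRel.rel (q := q))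
  simpa [map_mul, map_add, map_smul, map_one, zZ, zsZ] using h

lemma zsz : zsZ q * zZ q = 1 - ((q:ℂ)^2) • uA q := by
  rw [rel1, uA]
  module

lemma uz : uA q * zZ q = ((q:ℂ)^2) • (zZ q * uA q) := by
  have h1 : uA q * zZ q = zZ q - zZ q * (zsZ q * zZ q) := by
    rw [uA, sub_mul, one_mul, mul_assoc]
  rw [h1, zsz, mul_sub, mul_one, mul_smul_comm]
  abel

lemma zsu : zsZ q * uA q = ((q:ℂ)^2) • (uA q * zsZ q) := by
  have h1 : zsZ q * uA q = zsZ q - (zsZ q * zZ q) * zsZ q := by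
    rw [uA, mul_sub, mul_one, mul_assoc]
  rw [h1, zsz, sub_mul, one_mul, smul_mul_assoc]
  abel

lemma upow_z (i : ℕ) : uA q ^ i * zZ q = (((q:ℂ)^2)^i) • (zZ q * uA q ^ i) := by
  induction i with
  | zero => simp
  | succ i ih =>
    rw [pow_succ, mul_assoc, uz, mul_smul_comm, ← mul_assoc, ih, smul_mul_assoc,
      smul_smul, mul_assoc, ← pow_succ, ← pow_succ']

lemma fac_z (β : ℂ) : (1 - β • uA q) * zZ q = zZ q * (1 - ((q:ℂ)^2 * β) • uA q) := by
  rw [sub_mul, one_mul, smul_mul_assoc, uz, mul_sub, mul_one, mul_smul_comm,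
    smul_smul, mul_comm β]

lemma zs_fac (β : ℂ) : zsZ q * (1 - β • uA q) = (1 - ((q:ℂ)^2 * β) • uA q) * zsZ q := by
  rw [mul_sub, mul_one, mul_smul_comm, zsu, sub_mul, one_mul, smul_mul_assoc,
    smul_smul, mul_comm β]

variable (q) in
def Au : ℕ → ℕ → ZAlg q
  | 0, _ => 1
  | (k+1), c => (1 - (((q:ℂ)^2)^(c+1)) • uA q) * Au k (c+1)

lemma fac_u_comm (β : ℂ) : (1 - β • uA q) * uA q = uA q * (1 - β • uA q) := by
  rw [sub_mul, mul_sub, one_mul, mul_one, smul_mul_assoc, mul_smul_comm]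

lemma Au_u_comm (k c : ℕ) : Au q k c * uA q = uA q * Au q k c := by
  induction k generalizing c with
  | zero => simp [Au]
  | succ k ih =>
    rw [Au, mul_assoc, ih, ← mul_assoc, fac_u_comm, mul_assoc]

lemma Au_z (k : ℕ) : ∀ c, Au q k c * zZ q = zZ q * Au q k (c+1) := by
  induction k with
  | zero => intro c; simp [Au]
  | succ k ih =>
    intro c
    rw [Au, mul_assoc, ih, ← mul_assoc, fac_z, mul_assoc, Au]
    congr 3
    rw [← pow_succ']

lemma Au_zpow (k : ℕ) : ∀ (e c : ℕ), Au q k c * zZ q ^ e = zZ q ^ e * Au q k (c+e) := by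
  intro e
  induction e with
  | zero => intro c; simp
  | succ e ih =>
    intro c
    rw [pow_succ', ← mul_assoc, Au_z, mul_assoc, ih, ← mul_assoc, ← pow_succ']
    congr 2
    omega

lemma zs_Au (k : ℕ) : ∀ c, zsZ q * Au q k c = Au q k (c+1) * zsZ q := by
  induction k with
  | zero => intro c; simp [Au]
  | succ k ih =>
    intro c
    rw [Au, ← mul_assoc, zs_fac, mul_assoc, ih (c+1), ← mul_assoc, ← pow_succ']
    rfl

lemma zspow_Au (k : ℕ) : ∀ (e c : ℕ), zsZ q ^ e * Au q k c = Au q k (c+e) * zsZ q ^ e := by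
  intro e
  induction e with
  | zero => intro c; simp
  | succ e ih =>
    intro c
    rw [show c+(e+1) = c+1+e by omega, pow_succ, mul_assoc, zs_Au, ← mul_assoc,
      ih (c+1), ← mul_assoc]

lemma fac_zpow (β : ℂ) (e : ℕ) :
    (1 - β • uA q) * zZ q ^ e = zZ q ^ e * (1 - (((q:ℂ)^2)^e * β) • uA q) := by
  induction e generalizing β with
  | zero => simp
  | succ e ih =>
    rw [pow_succ', ← mul_assoc, fac_z, mul_assoc, ih ((q:ℂ)^2*β), ← mul_assoc, ← pow_succ']
    have hs : ((q:ℂ)^2)^e * ((q:ℂ)^2*β) = ((q:ℂ)^2)^(e+1)*β := by ring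
    rw [hs]

lemma Au_succ_right (k : ℕ) : ∀ c, Au q (k+1) c = Au q k c * (1 - (((q:ℂ)^2)^(c+k+1)) • uA q) := by
  induction k with
  | zero =>
    intro c
    show (1 - (((q:ℂ)^2)^(c+1)) • uA q) * Au q 0 (c+1) = Au q 0 c * _
    rw [show Au q 0 (c+1) = 1 from rfl, show Au q 0 c = 1 from rfl, mul_one, one_mul,
      show c+0+1 = c+1 by omega]
  | succ k ih =>
    intro c
    show (1 - (((q:ℂ)^2)^(c+1)) • uA q) * Au q (k+1) (c+1) = _
    rw [ih (c+1), ← mul_assoc]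
    rw [show c+(k+1)+1 = c+1+k+1 by omega]
    rfl

lemma zspow_zpow (k : ℕ) : zsZ q ^ k * zZ q ^ k = Au q k 0 := by
  induction k with
  | zero => simp [Au]
  | succ k ih =>
    rw [pow_succ, pow_succ' (zZ q), mul_assoc, ← mul_assoc (zsZ q), zsz, fac_zpow,
      ← mul_assoc, ih, Au_succ_right]
    congr 3
    rw [← pow_succ]
    norm_num

lemma u_succ_decomp (i : ℕ) :
    uA q ^ (i+1) = uA q ^ i - (((q:ℂ)^2)^i) • (zZ q * uA q ^ i * zsZ q) := by
  have h1 : uA q ^ (i+1) = uA q ^ i - uA q ^ i * (zZ q * zsZ q) := by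
    rw [pow_succ, uA, mul_sub, mul_one]
  rw [h1, ← mul_assoc, upow_z, smul_mul_assoc]

/-! ## h-value lemmas -/

section WithH

variable {α : ℝ} (h : ZAlg q →ₗ[ℂ] ℂ)
  (hh : ∀ k l : ℕ, h (zZ q ^ k * zsZ q ^ l) = if k = l then (hVal q α k : ℂ) else 0)

include hh in
lemma hmid (i : ℕ) : ∀ a b : ℕ, h (zZ q ^ a * uA q ^ i * zsZ q ^ b)
    = if a = b then ((mh q α i a : ℝ) : ℂ) else 0 := by
  induction i with
  | zero =>
    intro a b
    rw [pow_zero, mul_one, hh]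
    split <;> rfl
  | succ i ih =>
    intro a b
    have e : zZ q ^ a * uA q ^(i+1) * zsZ q ^ b
        = zZ q ^ a * uA q ^ i * zsZ q ^ b
          - (((q:ℂ)^2)^i) • (zZ q ^(a+1) * uA q ^ i * zsZ q ^(b+1)) := by
      rw [u_succ_decomp, mul_sub, sub_mul, mul_smul_comm, smul_mul_assoc]
      congr 2
      rw [pow_succ, pow_succ' (zsZ q)]
      simp only [mul_assoc]
    rw [e, map_sub, map_smul, ih, ih]
    by_cases hab : a = b
    · subst hab
      simp only [if_pos rfl, smul_eq_mul]
      rw [show mh q α (i+1) a = mh q α i a - (q^2)^i * mh q α i (a+1) from rfl]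
      push_cast
      ring
    · have hab' : ¬(a+1 = b+1) := by omega
      simp [hab, hab']

include hh in
lemma hAu (k : ℕ) : ∀ c i a b : ℕ, h (zZ q ^ a * (Au q k c * uA q ^ i) * zsZ q ^ b)
    = if a = b then ((nuv q α k c i a : ℝ) : ℂ) else 0 := by
  induction k with
  | zero =>
    intro c i a b
    rw [show Au q 0 c = 1 from rfl, one_mul, hmid h hh]
    split <;> rfl
  | succ k ih =>
    intro c i a b
    have e : Au q (k+1) c * uA q ^ i
        = Au q k (c+1) * uA q ^ i
          - (((q:ℂ)^2)^(c+1)) • (Au q k (c+1) * uA q ^ (i+1)) := by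
      rw [show Au q (k+1) c = (1 - (((q:ℂ)^2)^(c+1)) • uA q) * Au q k (c+1) from rfl]
      rw [sub_mul, one_mul, smul_mul_assoc, sub_mul, smul_mul_assoc,
        ← Au_u_comm, mul_assoc, ← pow_succ']
    rw [e, mul_sub, sub_mul, mul_smul_comm, smul_mul_assoc, map_sub, map_smul,
      ih, ih]
    by_cases hab : a = b
    · subst hab
      simp only [if_pos rfl, smul_eq_mul]
      rw [show nuv q α (k+1) c i a
        = nuv q α k (c+1) i a - (q^2)^(c+1) * nuv q α k (c+1) (i+1) a from rfl]
      push_cast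
      ring
    · simp [hab]

include hh in
lemma hH4 (l k m n : ℕ) : h ((zZ q ^ l * zsZ q ^ k) * (zZ q ^ m * zsZ q ^ n))
    = if k + n = l + m
        then (((if k ≤ m then nuv q α k (m-k) 0 n else nuv q α m (k-m) 0 l) : ℝ) : ℂ)
        else 0 := by
  by_cases hkm : k ≤ m
  · have hm : m = k + (m - k) := by omega
    have e : (zZ q ^ l * zsZ q ^ k) * (zZ q ^ m * zsZ q ^ n)
        = zZ q ^ (l + (m-k)) * (Au q k (m-k) * uA q ^ 0) * zsZ q ^ n := by
      rw [pow_zero, mul_one]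
      conv_lhs => rw [hm, pow_add]
      calc (zZ q ^ l * zsZ q ^ k) * (zZ q ^ k * zZ q ^ (m-k) * zsZ q ^ n)
          = zZ q ^ l * ((zsZ q ^ k * zZ q ^ k) * zZ q ^ (m-k)) * zsZ q ^ n := by
            simp only [mul_assoc]
        _ = zZ q ^ l * (Au q k 0 * zZ q ^ (m-k)) * zsZ q ^ n := by rw [zspow_zpow]
        _ = zZ q ^ l * (zZ q ^ (m-k) * Au q k (0 + (m-k))) * zsZ q ^ n := by rw [Au_zpow]
        _ = zZ q ^ (l + (m-k)) * Au q k (m-k) * zsZ q ^ n := by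
            rw [zero_add, pow_add]
            simp only [mul_assoc]
    rw [e, hAu h hh]
    by_cases hc : k + n = l + m
    · rw [if_pos (show l + (m-k) = n by omega), if_pos hc, if_pos hkm,
        show l + (m-k) = n by omega]
    · rw [if_neg (show ¬(l + (m-k) = n) by omega), if_neg hc]
  · have hk : k = (k - m) + m := by omega
    have e : (zZ q ^ l * zsZ q ^ k) * (zZ q ^ m * zsZ q ^ n)
        = zZ q ^ l * (Au q m (k-m) * uA q ^ 0) * zsZ q ^ ((k-m) + n) := by
      rw [pow_zero, mul_one]
      conv_lhs => rw [hk, pow_add]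
      calc (zZ q ^ l * (zsZ q ^ (k-m) * zsZ q ^ m)) * (zZ q ^ m * zsZ q ^ n)
          = zZ q ^ l * (zsZ q ^ (k-m) * (zsZ q ^ m * zZ q ^ m)) * zsZ q ^ n := by
            simp only [mul_assoc]
        _ = zZ q ^ l * (zsZ q ^ (k-m) * Au q m 0) * zsZ q ^ n := by rw [zspow_zpow]
        _ = zZ q ^ l * (Au q m (0 + (k-m)) * zsZ q ^ (k-m)) * zsZ q ^ n := by rw [zspow_Au]
        _ = zZ q ^ l * Au q m (k-m) * zsZ q ^ ((k-m) + n) := by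
            rw [zero_add, pow_add]
            simp only [mul_assoc]
    rw [e, hAu h hh]
    by_cases hc : k + n = l + m
    · rw [if_pos (show l = (k-m) + n by omega), if_pos hc, if_neg hkm]
    · rw [if_neg (show ¬(l = (k-m) + n) by omega), if_neg hc]

end WithH

/-! ## Spanning -/

variable (q) in
def SpanM : Submodule ℂ (ZAlg q) :=
  Submodule.span ℂ (Set.range (fun kl : ℕ × ℕ => zZ q ^ kl.1 * zsZ q ^ kl.2))

lemma mono_mem (k l : ℕ) : zZ q ^ k * zsZ q ^ l ∈ SpanM q :=
  Submodule.subset_span ⟨(k, l), rfl⟩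

lemma z_mul_mem {x : ZAlg q} (hx : x ∈ SpanM q) : zZ q * x ∈ SpanM q := by
  induction hx using Submodule.span_induction with
  | mem y hy =>
    obtain ⟨⟨k, l⟩, rfl⟩ := hy
    have : zZ q * (zZ q ^ k * zsZ q ^ l) = zZ q ^ (k+1) * zsZ q ^ l := by
      rw [pow_succ', mul_assoc]
    rw [this]
    exact mono_mem _ _
  | zero => rw [mul_zero]; exact Submodule.zero_mem _
  | add y z _ _ hy hz => rw [mul_add]; exact Submodule.add_mem _ hy hz
  | smul a y _ hy => rw [mul_smul_comm]; exact Submodule.smul_mem _ _ hy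

lemma zs_mul_mono_mem (k l : ℕ) : zsZ q * (zZ q ^ k * zsZ q ^ l) ∈ SpanM q := by
  induction k generalizing l with
  | zero =>
    rw [pow_zero, one_mul, ← pow_succ']
    simpa using mono_mem (q := q) 0 (l+1)
  | succ k ih =>
    have e : zsZ q * (zZ q ^ (k+1) * zsZ q ^ l)
        = ((q:ℂ)^2) • (zZ q * (zsZ q * (zZ q ^ k * zsZ q ^ l)))
          + ((1:ℂ) - (q:ℂ)^2) • (zZ q ^ k * zsZ q ^ l) := by
      rw [pow_succ', mul_assoc, ← mul_assoc (zsZ q), ← mul_assoc (zsZ q), rel1]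
      rw [add_mul, smul_mul_assoc, smul_mul_assoc, one_mul]
      simp only [mul_assoc]
    rw [e]
    exact Submodule.add_mem _
      (Submodule.smul_mem _ _ (z_mul_mem (ih l)))
      (Submodule.smul_mem _ _ (mono_mem _ _))

lemma zs_mul_mem {x : ZAlg q} (hx : x ∈ SpanM q) : zsZ q * x ∈ SpanM q := by
  induction hx using Submodule.span_induction with
  | mem y hy =>
    obtain ⟨⟨k, l⟩, rfl⟩ := hy
    exact zs_mul_mono_mem k l
  | zero => rw [mul_zero]; exact Submodule.zero_mem _
  | add y z _ _ hy hz => rw [mul_add]; exact Submodule.add_mem _ hy hz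
  | smul a y _ hy => rw [mul_smul_comm]; exact Submodule.smul_mem _ _ hy

lemma mono_mul_mem (k l : ℕ) {x : ZAlg q} (hx : x ∈ SpanM q) :
    (zZ q ^ k * zsZ q ^ l) * x ∈ SpanM q := by
  induction k generalizing x with
  | zero =>
    rw [pow_zero, one_mul]
    induction l generalizing x with
    | zero => rw [pow_zero, one_mul]; exact hx
    | succ l ihl =>
      rw [pow_succ, mul_assoc]
      exact ihl (zs_mul_mem hx)
  | succ k ihk =>
    have e : zZ q^(k+1) * zsZ q^l * x = zZ q * (zZ q^k * zsZ q^l * x) := by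
      rw [pow_succ']
      simp only [mul_assoc]
    rw [e]
    exact z_mul_mem (ihk hx)

lemma mul_mem_span {x y : ZAlg q} (hx : x ∈ SpanM q) (hy : y ∈ SpanM q) :
    x * y ∈ SpanM q := by
  induction hx using Submodule.span_induction with
  | mem w hw =>
    obtain ⟨⟨k, l⟩, rfl⟩ := hw
    exact mono_mul_mem k l hy
  | zero => rw [zero_mul]; exact Submodule.zero_mem _
  | add a b _ _ ha hb => rw [add_mul]; exact Submodule.add_mem _ ha hb
  | smul a w _ hw => rw [smul_mul_assoc]; exact Submodule.smul_mem _ _ hw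

lemma mem_spanM (x : ZAlg q) : x ∈ SpanM q := by
  obtain ⟨y, rfl⟩ := RingQuot.mkAlgHom_surjective ℂ (ZRel q) x
  induction y using FreeAlgebra.induction with
  | grade0 r =>
    rw [AlgHom.commutes]
    rw [Algebra.algebraMap_eq_smul_one]
    apply Submodule.smul_mem
    simpa using mono_mem (q := q) 0 0
  | grade1 x =>
    cases x with
    | z =>
      have : (RingQuot.mkAlgHom ℂ (ZRel q)) (FreeAlgebra.ι ℂ ZGen.z) = zZ q := rfl
      rw [this]
      simpa using mono_mem (q := q) 1 0
    | zs =>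
      have : (RingQuot.mkAlgHom ℂ (ZRel q)) (FreeAlgebra.ι ℂ ZGen.zs) = zsZ q := rfl
      rw [this]
      simpa using mono_mem (q := q) 0 1
  | mul a b ha hb =>
    rw [map_mul]
    exact mul_mem_span ha hb
  | add a b ha hb =>
    rw [map_add]
    exact Submodule.add_mem _ ha hb

lemma exists_rep (p : ZAlg q) : ∃ (N : ℕ) (c : ℕ × ℕ → ℂ),
    p = ∑ kl ∈ Finset.range N ×ˢ Finset.range N,
      c kl • (zZ q ^ kl.1 * zsZ q ^ kl.2) := by
  have hmem := mem_spanM p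
  rw [SpanM, Finsupp.mem_span_range_iff_exists_finsupp] at hmem
  obtain ⟨cf, hcf⟩ := hmem
  refine ⟨(cf.support.sup (fun kl => max kl.1 kl.2)) + 1, cf, ?_⟩
  rw [← hcf]
  apply Finsupp.sum_of_support_subset
  · intro kl hkl
    rw [Finset.mem_product, Finset.mem_range, Finset.mem_range]
    have h1 : max kl.1 kl.2 ≤ cf.support.sup (fun kl : ℕ × ℕ => max kl.1 kl.2) := by
      exact Finset.le_sup (f := fun kl : ℕ × ℕ => max kl.1 kl.2) hkl
    omega
  · intro kl _
    rw [zero_smul]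

end Stmt4Aux


open Stmt4Aux

/-- `h_α` is positive definite: `h_α(p* p) ≥ 0` (in particular it is real),
with equality iff `p = 0`. -/
theorem stmt4 (q α : ℝ) (hq0 : 0 < q) (hq1 : q < 1) (hα : -1 < α)
    (σ : ZAlg q →ₛₗ[starRingEnd ℂ] ZAlg q)
    (hσmul : ∀ x y, σ (x * y) = σ y * σ x)
    (hσz : σ (zZ q) = zsZ q) (hσzs : σ (zsZ q) = zZ q) (hσ1 : σ 1 = 1)
    (h : ZAlg q →ₗ[ℂ] ℂ)
    (hh : ∀ k l : ℕ, h (zZ q ^ k * zsZ q ^ l) = if k = l then (hVal q α k : ℂ) else 0) :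
    ∀ p : ZAlg q, ∃ t : ℝ, h (σ p * p) = (t : ℂ) ∧ 0 ≤ t ∧ (h (σ p * p) = 0 ↔ p = 0) := by
  intro p
  obtain ⟨N, c, hp⟩ := exists_rep p
  set B : Finset (ℕ × ℕ) := Finset.range N ×ˢ Finset.range N with hB
  set dd : ℕ × ℕ → ℤ := fun kl => (kl.1 : ℤ) - (kl.2 : ℤ) with hdd
  set D : Finset ℤ := Finset.Icc (-(N:ℤ)) (N:ℤ) with hD
  set g : ℤ → ℕ → ℂ := fun d t =>
    ∑ y ∈ B.filter (fun y => dd y = d), c y * ((Vk q y.2 t : ℝ) : ℂ) with hg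
  set E : ℕ → ℝ := fun t => ∑ d ∈ D, weight q α d t * Complex.normSq (g d t) with hE
  -- σ on monomials
  have hσpow : ∀ (x : ZAlg q) (n : ℕ), σ (x ^ n) = (σ x) ^ n := by
    intro x n
    induction n with
    | zero => simpa using hσ1
    | succ n ih => rw [pow_succ, hσmul, ih, pow_succ']
  have hσp : σ p = ∑ kl ∈ B, (starRingEnd ℂ) (c kl) • (zZ q ^ kl.2 * zsZ q ^ kl.1) := by
    rw [hp, map_sum]
    apply Finset.sum_congr rfl
    intro kl _
    rw [LinearMap.map_smulₛₗ, hσmul, hσpow, hσpow, hσz, hσzs]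
  -- expansion of h (σ p * p)
  have hexp : h (σ p * p) = ∑ x ∈ B, ∑ y ∈ B,
      ((starRingEnd ℂ) (c x) * c y) *
        (if x.1 + y.2 = x.2 + y.1
          then (((if x.1 ≤ y.1 then nuv q α x.1 (y.1 - x.1) 0 y.2
                  else nuv q α y.1 (x.1 - y.1) 0 x.2) : ℝ) : ℂ)
          else 0) := by
    rw [hσp, hp, Finset.sum_mul_sum, map_sum]
    apply Finset.sum_congr rfl
    intro x _
    rw [map_sum]
    apply Finset.sum_congr rfl
    intro y _
    rw [smul_mul_assoc, mul_smul_comm, smul_smul, map_smul, smul_eq_mul]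
    rw [hH4 h hh x.2 x.1 y.1 y.2]
  -- per-pair HasSum
  set F : (ℕ × ℕ) → (ℕ × ℕ) → ℕ → ℝ := fun x y t =>
    if dd x = dd y then weight q α (dd x) t * (Vk q x.2 t * Vk q y.2 t) else 0 with hF
  have perpair : ∀ x ∈ B, ∀ y ∈ B,
      HasSum (fun t => ((starRingEnd ℂ) (c x) * c y) * ((F x y t : ℝ) : ℂ))
        (((starRingEnd ℂ) (c x) * c y) *
          (if x.1 + y.2 = x.2 + y.1
            then (((if x.1 ≤ y.1 then nuv q α x.1 (y.1 - x.1) 0 y.2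
                    else nuv q α y.1 (x.1 - y.1) 0 x.2) : ℝ) : ℂ)
            else 0)) := by
    intro x _ y _
    by_cases hcond : x.1 + y.2 = x.2 + y.1
    · have hddxy : dd x = dd y := by rw [hdd]; push_cast; omega
      have hm := master (q := q) (α := α) hq0 hq1 hα x.1 x.2 y.1 y.2 (by omega)
      have hm' := (Complex.hasSum_ofReal.mpr hm).mul_left ((starRingEnd ℂ) (c x) * c y)
      rw [if_pos hcond]
      have hfun : (fun t => ((starRingEnd ℂ) (c x) * c y) * ((F x y t : ℝ) : ℂ))
          = fun t => ((starRingEnd ℂ) (c x) * c y) *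
              ((weight q α ((x.1:ℤ) - (x.2:ℤ)) t * (Vk q x.2 t * Vk q y.2 t) : ℝ) : ℂ) := by
        funext t
        simp only [hF, if_pos hddxy, hdd]
        rw [if_pos (by omega)]
      rw [hfun]
      exact hm'
    · have hddxy : ¬ (dd x = dd y) := by rw [hdd]; push_cast; omega
      rw [if_neg hcond]
      simp only [hF, if_neg hddxy, mul_zero]
      simpa using (hasSum_zero : HasSum (fun _ : ℕ => (0:ℂ)) 0)
  have Total : HasSum (fun t => ∑ x ∈ B, ∑ y ∈ B,
      ((starRingEnd ℂ) (c x) * c y) * ((F x y t : ℝ) : ℂ)) (h (σ p * p)) := by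
    rw [hexp]
    exact hasSum_sum (fun x hx => hasSum_sum (fun y hy => perpair x hx y hy))
  -- fiberwise regrouping, per t
  have hmaps : ∀ x ∈ B, dd x ∈ D := by
    intro x hx
    rw [hB] at hx
    simp only [Finset.mem_product, Finset.mem_range] at hx
    simp only [hD, Finset.mem_Icc, hdd]
    omega
  have PerT : ∀ t, (∑ x ∈ B, ∑ y ∈ B,
      ((starRingEnd ℂ) (c x) * c y) * ((F x y t : ℝ) : ℂ)) = ((E t : ℝ) : ℂ) := by
    intro t
    have step1 : ∀ x ∈ B, (∑ y ∈ B, ((starRingEnd ℂ) (c x) * c y) * ((F x y t : ℝ) : ℂ))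
        = ((starRingEnd ℂ) (c x) * ((Vk q x.2 t : ℝ) : ℂ)) *
            (((weight q α (dd x) t : ℝ) : ℂ) * g (dd x) t) := by
      intro x _
      have e1 : ∀ y ∈ B, ((starRingEnd ℂ) (c x) * c y) * ((F x y t : ℝ) : ℂ)
          = if dd y = dd x
              then (c y * ((Vk q y.2 t : ℝ) : ℂ)) *
                ((starRingEnd ℂ) (c x) * ((Vk q x.2 t : ℝ) : ℂ) * ((weight q α (dd x) t : ℝ) : ℂ))
              else 0 := by
        intro y _
        simp only [hF]
        by_cases hc : dd x = dd y
        · rw [if_pos hc, if_pos hc.symm]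
          push_cast
          ring
        · rw [if_neg hc, if_neg (fun hcc => hc hcc.symm)]
          push_cast
          ring
      rw [Finset.sum_congr rfl e1, ← Finset.sum_filter, ← Finset.sum_mul]
      simp only [hg]
      ring
    rw [Finset.sum_congr rfl step1]
    rw [← Finset.sum_fiberwise_of_maps_to hmaps]
    have step2 : ∀ d ∈ D, (∑ x ∈ B.filter (fun x => dd x = d),
        ((starRingEnd ℂ) (c x) * ((Vk q x.2 t : ℝ) : ℂ)) *
          (((weight q α (dd x) t : ℝ) : ℂ) * g (dd x) t))
        = ((weight q α d t * Complex.normSq (g d t) : ℝ) : ℂ) := by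
      intro d _
      have e2 : ∀ x ∈ B.filter (fun x => dd x = d),
          ((starRingEnd ℂ) (c x) * ((Vk q x.2 t : ℝ) : ℂ)) *
            (((weight q α (dd x) t : ℝ) : ℂ) * g (dd x) t)
          = ((starRingEnd ℂ) (c x * ((Vk q x.2 t : ℝ) : ℂ))) *
            (((weight q α d t : ℝ) : ℂ) * g d t) := by
        intro x hx
        obtain ⟨_, hxd⟩ := Finset.mem_filter.mp hx
        rw [hxd, map_mul, Complex.conj_ofReal]
      have key : ∀ (w : ℝ) (Sc : ℂ), (starRingEnd ℂ) Sc * (((w:ℝ):ℂ) * Sc)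
          = ((w * Complex.normSq Sc : ℝ) : ℂ) := by
        intro w Sc
        calc (starRingEnd ℂ) Sc * (((w:ℝ):ℂ) * Sc)
            = ((w:ℝ):ℂ) * (Sc * (starRingEnd ℂ) Sc) := by ring
          _ = ((w:ℝ):ℂ) * ((Complex.normSq Sc : ℝ) : ℂ) := by rw [Complex.mul_conj]
          _ = ((w * Complex.normSq Sc : ℝ) : ℂ) := by push_cast; ring
      rw [Finset.sum_congr rfl e2, ← Finset.sum_mul, ← map_sum]
      exact key (weight q α d t) (g d t)
    rw [Finset.sum_congr rfl step2]
    simp only [hE]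
    push_cast
    ring
  have hsum2 : HasSum (fun t => ((E t : ℝ) : ℂ)) (h (σ p * p)) := by
    have := Total
    rwa [show (fun t => ∑ x ∈ B, ∑ y ∈ B,
      ((starRingEnd ℂ) (c x) * c y) * ((F x y t : ℝ) : ℂ)) = fun t => ((E t : ℝ) : ℂ)
      from funext PerT] at this
  have hre : HasSum E ((h (σ p * p)).re) := by
    have := Complex.reCLM.hasSum hsum2
    simpa using this
  have hofre : h (σ p * p) = (((h (σ p * p)).re : ℝ) : ℂ) :=
    hsum2.unique (Complex.hasSum_ofReal.mpr hre)
  have Enn : ∀ t, 0 ≤ E t := by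
    intro t
    apply Finset.sum_nonneg
    intro d _
    exact mul_nonneg (weight_nonneg hq0 hq1 hα d t) (Complex.normSq_nonneg _)
  have htt0 : 0 ≤ (h (σ p * p)).re := hasSum_le (fun t => Enn t) hasSum_zero hre
  refine ⟨(h (σ p * p)).re, hofre, htt0, ?_, ?_⟩
  · -- h (σ p * p) = 0 → p = 0
    intro hzero
    have httz : (h (σ p * p)).re = 0 := by
      rw [hzero]
      rfl
    have hterm : ∀ t, E t = 0 := by
      intro t
      refine le_antisymm ?_ (Enn t)
      have := le_hasSum hre t (fun j _ => Enn j)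
      rw [httz] at this
      exact this
    have hdt : ∀ t, ∀ d ∈ D, weight q α d t * Complex.normSq (g d t) = 0 := by
      intro t
      exact (Finset.sum_eq_zero_iff_of_nonneg (fun d _ =>
        mul_nonneg (weight_nonneg hq0 hq1 hα d t) (Complex.normSq_nonneg _))).mp (hterm t)
    have hczero : ∀ l₀ : ℕ, ∀ k, (k, l₀) ∈ B → c (k, l₀) = 0 := by
      intro l₀
      induction l₀ using Nat.strong_induction_on with
      | _ l₀ ih =>
        intro k hkB
        have hkN : k < N ∧ l₀ < N := by
          rw [hB, Finset.mem_product, Finset.mem_range, Finset.mem_range] at hkB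
          exact hkB
        set d : ℤ := (k : ℤ) - (l₀ : ℤ) with hd
        have hdD : d ∈ D := by
          rw [hD, Finset.mem_Icc]
          omega
        have hwpos : 0 < weight q α d l₀ :=
          weight_pos hq0 hq1 hα d l₀ (by omega)
        have hgz : g d l₀ = 0 := by
          rcases mul_eq_zero.mp (hdt l₀ d hdD) with h1 | h2
          · exact absurd h1 (ne_of_gt hwpos)
          · exact Complex.normSq_eq_zero.mp h2
        have hmemf : (k, l₀) ∈ B.filter (fun y => dd y = d) :=
          Finset.mem_filter.mpr ⟨hkB, rfl⟩
        have hsingle : g d l₀ = c (k, l₀) * ((Qk q l₀ : ℝ) : ℂ) := by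
          simp only [hg]
          rw [Finset.sum_eq_single (k, l₀)]
          · rw [Vk_self hq0 hq1]
          · intro y hy hne
            obtain ⟨hyB, hyd⟩ := Finset.mem_filter.mp hy
            by_cases hyl : y.2 = l₀
            · exfalso
              apply hne
              have hy1 : y.1 = k := by
                simp only [hdd] at hyd
                rw [hd] at hyd
                omega
              rw [← hy1, ← hyl]
            · rcases Nat.lt_or_ge y.2 l₀ with hlt | hge
              · have hyB' : (y.1, y.2) ∈ B := by rwa [Prod.mk.eta]
                have := ih y.2 hlt y.1 hyB'
                rw [Prod.mk.eta] at this
                rw [this, zero_mul]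
              · have hgt : l₀ < y.2 := by omega
                rw [Vk_eq_zero (q := q) y.2 l₀ hgt]
                simp
          · intro hnm
            exact absurd hmemf hnm
        have hQne : ((Qk q l₀ : ℝ) : ℂ) ≠ 0 := by
          simpa using (Qk_pos hq0 hq1 l₀).ne'
        have := hsingle ▸ hgz
        exact (mul_eq_zero.mp this).resolve_right hQne
    rw [hp]
    apply Finset.sum_eq_zero
    intro kl hkl
    have : c (kl.1, kl.2) = 0 := hczero kl.2 kl.1 (by rwa [Prod.mk.eta])
    rw [Prod.mk.eta] at this
    rw [this, zero_smul]
  · -- p = 0 → h (σ p * p) = 0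
    intro hp0
    rw [hp0, mul_zero, map_zero]
end
end

section
/- Applying the multiplicative functional ε : Z → ℂ with ε(z) = ε(z*) = 1 to the linearization formula yields Σ_{l'',m''} a(l,m; l',m'; l'',m'') = 1 for every (l,m), (l',m'); combined with non-negativity, each δ_{(l,m)} ⋆ δ_{(l',m')} defined by these coefficients is a probability measure on ℤ≥0². -/
noncomputable section

open scoped BigOperators

/-- The coefficient of `x^k` in the little `q`-Jacobi polynomial
`P_m^{(α,β)}(x;qb) = p_m(x; qb^α, qb^β; qb)`. -/
def lqJacobiCoef (qb α β : ℝ) (m k : ℕ) : ℝ :=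
  qPoch (qb ^ (-(m : ℤ))) qb k * qPoch (qb ^ (α + β + m + 1 : ℝ)) qb k /
    (qPoch (qb ^ (α + 1 : ℝ)) qb k * qPoch qb qb k) * qb ^ k

/-- The little `q`-Jacobi polynomial `P_m^{(α,β)}(·;qb)` evaluated at an algebra element. -/
def lqJacobiEval {A : Type} [Ring A] [Algebra ℂ A] (qb α β : ℝ) (m : ℕ) (x : A) : A :=
  ∑ k ∈ Finset.range (m + 1), (lqJacobiCoef qb α β m k : ℂ) • x ^ k

/-- The `q`-disk polynomial `R^{(α)}_{l,m}(z, z*; qb)`: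
`z^{l-m} P_m^{(α,l-m)}(1 - z z*; qb)` for `l ≥ m`, and
`P_l^{(α,m-l)}(1 - z z*; qb) (z*)^{m-l}` for `l ≤ m`. -/
def Rdisk (q qb α : ℝ) (l m : ℕ) : ZAlg q :=
  if m ≤ l then
    zZ q ^ (l - m) * lqJacobiEval qb α ((l : ℝ) - m) m (1 - zZ q * zsZ q)
  else
    lqJacobiEval qb α ((m : ℝ) - l) l (1 - zZ q * zsZ q) * zsZ q ^ (m - l)

/-! Since `P_m^{(α,β)}(0) = 1` and `ε(1 - z z*) = 0`, the character `ε` equals `1` on every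
`q`-disk polynomial, so the coefficient sum of any `x` in the basis `R_{l,m}` is `ε x`.
For `x = R_{l,m} (R_{l',m'})*` this is `ε(R_{l,m}) · conj ε(R_{l',m'}) = 1`. -/

lemma lqJacobiCoef_zero (qb α β : ℝ) (m : ℕ) : lqJacobiCoef qb α β m 0 = 1 := by
  simp [lqJacobiCoef, qPoch]

lemma map_lqJacobiEval_eq_one {A : Type} [Ring A] [Algebra ℂ A] (φ : A →ₐ[ℂ] ℂ)
    (qb α β : ℝ) (m : ℕ) {x : A} (hx : φ x = 0) : φ (lqJacobiEval qb α β m x) = 1 := by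
  rw [lqJacobiEval, map_sum, Finset.sum_eq_single 0]
  · simp [lqJacobiCoef_zero]
  · intro k _ hk
    rw [map_smul, map_pow, hx, zero_pow hk, smul_zero]
  · simp

lemma map_Rdisk_eq_one {q : ℝ} (ε : ZAlg q →ₐ[ℂ] ℂ) (hεz : ε (zZ q) = 1)
    (hεzs : ε (zsZ q) = 1) (qb α : ℝ) (l m : ℕ) : ε (Rdisk q qb α l m) = 1 := by
  have hx : ε (1 - zZ q * zsZ q) = 0 := by simp [hεz, hεzs]
  unfold Rdisk
  split <;> simp [hεz, hεzs, map_lqJacobiEval_eq_one ε _ _ _ _ hx]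

/-- On the generators `ε ∘ σ` agrees with `conj ∘ ε`; both are conjugate-linear and
multiplicative into the commutative `ℂ`, hence they agree everywhere. -/
lemma map_antihom_eq_conj {q : ℝ} (σ : ZAlg q →ₛₗ[starRingEnd ℂ] ZAlg q)
    (hσmul : ∀ x y, σ (x * y) = σ y * σ x) (hσz : σ (zZ q) = zsZ q)
    (hσzs : σ (zsZ q) = zZ q) (ε : ZAlg q →ₐ[ℂ] ℂ) (hεz : ε (zZ q) = 1)
    (hεzs : ε (zsZ q) = 1) (x : ZAlg q) : ε (σ x) = starRingEnd ℂ (ε x) := by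
  -- `σ zs = σ (zs * 1) = σ 1 * z` forces `ε (σ 1) = 1`.
  have hσ1 : ε (σ 1) = 1 := by
    simpa [hσzs, hεz] using (congrArg ε (hσmul (zsZ q) 1)).symm
  obtain ⟨y, rfl⟩ := RingQuot.mkAlgHom_surjective ℂ (ZRel q) x
  induction y using FreeAlgebra.induction with
  | grade0 c =>
    rw [AlgHom.commutes, Algebra.algebraMap_eq_smul_one, map_smulₛₗ]
    simp [hσ1]
  | grade1 g =>
    cases g
    · change ε (σ (zZ q)) = starRingEnd ℂ (ε (zZ q))
      simp [hσz, hεz, hεzs]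
    · change ε (σ (zsZ q)) = starRingEnd ℂ (ε (zsZ q))
      simp [hσzs, hεz, hεzs]
  | mul a c iha ihc =>
    rw [map_mul, hσmul, map_mul, iha, ihc, map_mul, map_mul, mul_comm]
  | add a c iha ihc =>
    rw [map_add, map_add, map_add, iha, ihc, map_add, map_add]

lemma Module.Basis.sum_repr_eq_of_apply_eq_one {ι R M : Type*} [CommSemiring R]
    [AddCommMonoid M] [Module R M] (b : Module.Basis ι R M) (f : M →ₗ[R] R)
    (hf : ∀ i, f (b i) = 1) (x : M) : (b.repr x).sum (fun _ a => a) = f x := by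
  conv_rhs => rw [← b.linearCombination_repr x]
  simp [Finsupp.linearCombination_apply, map_finsuppSum, hf]

theorem stmt16_general (q α : ℝ)
    (σ : ZAlg q →ₛₗ[starRingEnd ℂ] ZAlg q)
    (hσmul : ∀ x y, σ (x * y) = σ y * σ x)
    (hσz : σ (zZ q) = zsZ q) (hσzs : σ (zsZ q) = zZ q)
    (b : Module.Basis (ℕ × ℕ) ℂ (ZAlg q))
    (hb : ∀ l m : ℕ, b (l, m) = Rdisk q (q ^ 2) α l m)
    (ε : ZAlg q →ₐ[ℂ] ℂ) (hεz : ε (zZ q) = 1) (hεzs : ε (zsZ q) = 1)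
    (l m l' m' : ℕ) :
    (b.repr (Rdisk q (q ^ 2) α l m * σ (Rdisk q (q ^ 2) α l' m'))).sum
        (fun _ a => a) = 1 := by
  have hεR := map_Rdisk_eq_one ε hεz hεzs (q ^ 2) α
  rw [b.sum_repr_eq_of_apply_eq_one ε.toLinearMap fun ⟨i, j⟩ => by simp [hb, hεR]]
  simp [hεR, map_antihom_eq_conj σ hσmul hσz hσzs ε hεz hεzs]

/-- Applying the multiplicative functional `ε : Z → ℂ` with `ε(z) = ε(z*) = 1` to the
linearization formula yields `Σ_{l'',m''} a(l,m;l',m';l'',m'') = 1`. -/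
theorem stmt16 (q α : ℝ) (hq0 : 0 < q) (hq1 : q < 1) (hα : 0 < α)
    (σ : ZAlg q →ₛₗ[starRingEnd ℂ] ZAlg q)
    (hσmul : ∀ x y, σ (x * y) = σ y * σ x)
    (hσz : σ (zZ q) = zsZ q) (hσzs : σ (zsZ q) = zZ q) (hσ1 : σ 1 = 1)
    (b : Module.Basis (ℕ × ℕ) ℂ (ZAlg q))
    (hb : ∀ l m : ℕ, b (l, m) = Rdisk q (q ^ 2) α l m)
    (ε : ZAlg q →ₐ[ℂ] ℂ) (hεz : ε (zZ q) = 1) (hεzs : ε (zsZ q) = 1)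
    (l m l' m' : ℕ) :
    (b.repr (Rdisk q (q ^ 2) α l m * σ (Rdisk q (q ^ 2) α l' m'))).sum
        (fun _ a => a) = 1 :=
  stmt16_general q α σ hσmul hσz hσzs b hb ε hεz hεzs l m l' m'
end
end
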